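/- arXiv:2301.12930 — 3 statements merged into one kernel-verified Lean document; each statement's English description precedes it below -/
import Mathlib

section
/- Let Y = f(X) + g(X)·E where E is independent of X, has mean μ and standard deviation σ > 0, and g(x) > 0. Suppose estimators satisfy f̂(x) = E[Y|X=x] and ĝ(x) = STD[Y|X=x] for all x. Then the residual R = (Y − f̂(X))/ĝ(X) equals (E − μ)/σ, and in particular R is independent of X. -/
open MeasureTheory ProbabilityTheory

lemma variance_const_add_mul {Ω : Type*} [MeasurableSpace Ω] (P : Measure Ω)
    [IsProbabilityMeasure P] (E : Ω → ℝ) (hE2 : MemLp E 2 P) (c a : ℝ) :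
    variance (fun ω => c + a * E ω) P = a ^ 2 * variance E P := by
  have hint : Integrable E P := hE2.integrable one_le_two
  have h1 : ∫ ω, (c + a * E ω) ∂P = c + a * ∫ ω, E ω ∂P := by
    rw [integral_add (integrable_const c) (hint.const_mul a), integral_const,
      probReal_univ, smul_eq_mul, one_mul, integral_const_mul]
  have h2 : ∫ ω, a * E ω ∂P = a * ∫ ω, E ω ∂P := integral_const_mul a E
  have key : evariance (fun ω => c + a * E ω) P = evariance (fun ω => a * E ω) P := by
    unfold evariance
    rw [h1, h2]
    congr 1
    ext ω
    congr 2
    ring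
  have := variance_const_mul a E P
  rw [variance, key, ← variance]
  exact this

/-- Residual independence in LSNMs: if f̂(x) = E[Y|X=x] and ĝ(x) = STD[Y|X=x]
(encoded via the law of f(x) + g(x)·E, using E ⊥ X), then the residual
R = (Y − f̂(X))/ĝ(X) equals (E − μ)/σ pointwise and is independent of X. -/
theorem lsnm_residual_independence {Ω : Type*} [MeasurableSpace Ω] (P : Measure Ω)
    [IsProbabilityMeasure P] (X E : Ω → ℝ) (f g fhat ghat : ℝ → ℝ) (μ σ : ℝ)
    (hindep : IndepFun X E P)
    (hEmeas : Measurable E)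
    (hE2 : MemLp E 2 P)
    (hmean : ∫ ω, E ω ∂P = μ)
    (hvar : variance E P = σ ^ 2)
    (hσ : 0 < σ)
    (hg : ∀ x, 0 < g x)
    (hfhat : ∀ x, fhat x = ∫ ω, (f x + g x * E ω) ∂P)
    (hghat : ∀ x, ghat x = Real.sqrt (variance (fun ω => f x + g x * E ω) P)) :
    (∀ ω, (f (X ω) + g (X ω) * E ω - fhat (X ω)) / ghat (X ω) = (E ω - μ) / σ) ∧
    IndepFun (fun ω => (f (X ω) + g (X ω) * E ω - fhat (X ω)) / ghat (X ω)) X P := by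
  have hint : Integrable E P := hE2.integrable one_le_two
  have hfhat' : ∀ x, fhat x = f x + g x * μ := by
    intro x
    rw [hfhat x, integral_add (integrable_const _) (hint.const_mul _), integral_const,
      probReal_univ, smul_eq_mul, one_mul, integral_const_mul, hmean]
  have hghat' : ∀ x, ghat x = g x * σ := by
    intro x
    rw [hghat x, variance_const_add_mul P E hE2 (f x) (g x), hvar, ← mul_pow,
      Real.sqrt_sq (mul_nonneg (hg x).le hσ.le)]
  have hpt : ∀ ω, (f (X ω) + g (X ω) * E ω - fhat (X ω)) / ghat (X ω) = (E ω - μ) / σ := by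
    intro ω
    rw [hfhat', hghat']
    have hgne : g (X ω) ≠ 0 := (hg _).ne'
    field_simp
    ring
  refine ⟨hpt, ?_⟩
  have : (fun ω => (f (X ω) + g (X ω) * E ω - fhat (X ω)) / ghat (X ω)) =
      (fun e => (e - μ) / σ) ∘ E := funext fun ω => hpt ω
  rw [this]
  exact (hindep.symm.comp (by measurability) measurable_id)
end

section
/- Suppose (X, Y) satisfies LSNMs in both directions with exponential noise: Y = f(X) + g(X)·E_Y with E_Y ~ Exponential(λ) independent of X, and X = h(Y) + k(Y)·E_X with E_X ~ Exponential(λ) independent of Y, with g, k > 0 differentiable and positive differentiable marginal densities. Then d/dx (1/g(x)) = d/dy (1/k(y)) for all x, y in the support, hence both derivatives equal a common constant c; consequently 1/g and 1/k are either both constant or both affine with the same slope c. -/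
/-! If a function of `(x, y)` is affine in `y` with slope `B x` and also affine in `x` with
slope `D y`, then evaluating at `y = 0, 1` and `x = 0, 1` shows that `B` and `D` are affine
with one common slope (the mixed second difference). For the two exponential-noise LSNMs the
slopes are `-λ/g` and `-λ/k`, so `1/g` and `1/k` are affine with the same slope. -/

theorem exists_common_slope_of_add_mul_eq_add_mul {R : Type*} [CommRing R] {A B C D : R → R}
    (h : ∀ x y, A x + B x * y = C y + D y * x) :
    ∃ s, (∀ x, B x = B 0 + s * x) ∧ ∀ y, D y = D 0 + s * y := by
  have hB : ∀ x, B x = B 0 + (D 1 - D 0) * x := fun x => by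
    linear_combination h x 1 - h x 0 - h 0 1 + h 0 0
  refine ⟨D 1 - D 0, hB, fun y => ?_⟩
  linear_combination h 0 y - h 1 y + h 1 0 - h 0 0 + y * hB 1

theorem deriv_eq_div_of_mul_eq_add_mul {u : ℝ → ℝ} {a s : ℝ} (ha : a ≠ 0)
    (hu : ∀ x, a * u x = a * u 0 + s * x) (x : ℝ) : deriv u x = s / a := by
  have hu_affine : u = fun x => u 0 + s / a * x := funext fun x => by
    field_simp
    linear_combination hu x
  rw [hu_affine]
  simp

theorem lsnm_exponential_identifiability_general (lam : ℝ) (hlam : 0 < lam)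
    (pX pY f g h k : ℝ → ℝ)
    (hjoint : ∀ x y : ℝ,
      Real.log (pX x) + Real.log lam - Real.log (g x) - (lam / g x) * (y - f x)
        = Real.log (pY y) + Real.log lam - Real.log (k y) - (lam / k y) * (x - h y)) :
    (∀ x y : ℝ, deriv (fun t => 1 / g t) x = deriv (fun t => 1 / k t) y) ∧
    ∃ c : ℝ, (∀ x, deriv (fun t => 1 / g t) x = c) ∧ (∀ y, deriv (fun t => 1 / k t) y = c) := by
  obtain ⟨s, hg, hk⟩ := exists_common_slope_of_add_mul_eq_add_mul
    (A := fun x => Real.log (pX x) + Real.log lam - Real.log (g x) + lam / g x * f x)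
    (B := fun x => -lam * (1 / g x))
    (C := fun y => Real.log (pY y) + Real.log lam - Real.log (k y) + lam / k y * h y)
    (D := fun y => -lam * (1 / k y))
    (fun x y => by linear_combination hjoint x y)
  have hlam' : -lam ≠ 0 := neg_ne_zero.mpr hlam.ne'
  have hdg := deriv_eq_div_of_mul_eq_add_mul hlam' hg
  have hdk := deriv_eq_div_of_mul_eq_add_mul hlam' hk
  exact ⟨fun x y => (hdg x).trans (hdk y).symm, s / -lam, hdg, hdk⟩

/-- Identifiability with exponential noise: if the joint log-density equals that of an
exponential-noise LSNM in both directions, then (1/g)' is everywhere equal to (1/k)',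
hence both are a common constant c; so 1/g and 1/k are both constant or both affine
with the same slope. -/
theorem lsnm_exponential_identifiability (lam : ℝ) (hlam : 0 < lam)
    (pX pY f g h k : ℝ → ℝ)
    (hpX : Differentiable ℝ pX) (hpY : Differentiable ℝ pY)
    (hf : Differentiable ℝ f) (hh : Differentiable ℝ h)
    (hgdiff : Differentiable ℝ g) (hkdiff : Differentiable ℝ k)
    (hpXpos : ∀ x, 0 < pX x) (hpYpos : ∀ y, 0 < pY y)
    (hgpos : ∀ x, 0 < g x) (hkpos : ∀ y, 0 < k y)
    (hjoint : ∀ x y : ℝ,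
      Real.log (pX x) + Real.log lam - Real.log (g x) - (lam / g x) * (y - f x)
        = Real.log (pY y) + Real.log lam - Real.log (k y) - (lam / k y) * (x - h y)) :
    (∀ x y : ℝ, deriv (fun t => 1 / g t) x = deriv (fun t => 1 / k t) y) ∧
    ∃ c : ℝ, (∀ x, deriv (fun t => 1 / g t) x = c) ∧ (∀ y, deriv (fun t => 1 / k t) y = c) :=
  lsnm_exponential_identifiability_general lam hlam pX pY f g h k hjoint
end

section
/- Suppose (X, Y) satisfies LSNMs in both directions with continuous Bernoulli noise of parameter λ ≠ 1/2: Y = f(X) + g(X)·E_Y and X = h(Y) + k(Y)·E_X, with E_Y, E_X ~ ContinuousBernoulli(λ) independent of the respective cause, g, k > 0 differentiable, and positive differentiable marginal densities. Then (1/g(x))' = (1/k(y))' for all x, y in the support; hence 1/g and 1/k are both constant or both affine with the same slope. -/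
/-!
Subtracting the joint log-density at `(x, 0)` and `(0, y)` from its values at `(x, y)` and
`(0, 0)` is a discrete analogue of `∂²/∂x∂y`: it kills every term depending on `x` or on `y`
alone and leaves `(log λ - log (1 - λ)) · (y (1/g x - 1/g 0) - x (1/k y - 1/k 0)) = 0`.
For `λ ≠ 1/2` the logarithmic factor is nonzero, and the remaining functional equation forces
`1/g` and `1/k` to be affine with a common slope.
-/

theorem exists_affine_of_mul_sub_eq_mul_sub {R : Type*} [CommRing R] {u v : R → R}
    (h : ∀ x y, y * (u x - u 0) = x * (v y - v 0)) :
    ∃ c, (∀ x, u x = c * x + u 0) ∧ ∀ y, v y = c * y + v 0 := by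
  refine ⟨v 1 - v 0, fun x => ?_, fun y => ?_⟩
  · linear_combination h x 1
  · linear_combination y * h 1 1 - h 1 y

theorem deriv_eq_of_forall_eq_affine {u : ℝ → ℝ} {c d : ℝ} (hu : ∀ x, u x = c * x + d) (x : ℝ) :
    deriv u x = c := by
  rw [funext hu]
  simp

theorem Real.log_sub_log_one_sub_ne_zero {p : ℝ} (hp0 : 0 < p) (hp1 : p < 1) (hp : p ≠ 1 / 2) :
    Real.log p - Real.log (1 - p) ≠ 0 := by
  refine sub_ne_zero.mpr (Real.log_injOn_pos.ne hp0 (sub_pos.mpr hp1) ?_)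
  contrapose! hp
  linarith

theorem lsnm_continuous_bernoulli_identifiability_general (lam C : ℝ)
    (hlam0 : 0 < lam) (hlam1 : lam < 1) (hlamhalf : lam ≠ 1 / 2)
    (pX pY f g h k : ℝ → ℝ)
    (hjoint : ∀ x y : ℝ,
      Real.log (pX x) - Real.log (g x) + Real.log C
          + ((y - f x) / g x) * Real.log lam
          + (1 - (y - f x) / g x) * Real.log (1 - lam)
        = Real.log (pY y) - Real.log (k y) + Real.log C
          + ((x - h y) / k y) * Real.log lam
          + (1 - (x - h y) / k y) * Real.log (1 - lam)) :
    (∀ x y : ℝ, deriv (fun t => 1 / g t) x = deriv (fun t => 1 / k t) y) ∧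
    ∃ c : ℝ, (∀ x, deriv (fun t => 1 / g t) x = c) ∧ (∀ y, deriv (fun t => 1 / k t) y = c) := by
  have hL := Real.log_sub_log_one_sub_ne_zero hlam0 hlam1 hlamhalf
  have hmixed : ∀ x y, y * (1 / g x - 1 / g 0) = x * (1 / k y - 1 / k 0) := fun x y =>
    mul_left_cancel₀ hL <| by
      linear_combination hjoint x y - hjoint x 0 - hjoint 0 y + hjoint 0 0
  obtain ⟨c, hg, hk⟩ := exists_affine_of_mul_sub_eq_mul_sub (u := fun t => 1 / g t)
    (v := fun t => 1 / k t) hmixed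
  have hdg := deriv_eq_of_forall_eq_affine hg
  have hdk := deriv_eq_of_forall_eq_affine hk
  exact ⟨fun x y => by rw [hdg, hdk], c, hdg, hdk⟩

/-- Identifiability with continuous Bernoulli noise (λ ≠ 1/2): if the joint
log-density equals that of a continuous-Bernoulli-noise LSNM in both directions,
then (1/g)' is everywhere equal to (1/k)'; hence 1/g and 1/k are both constant
or both affine with the same slope. -/
theorem lsnm_continuous_bernoulli_identifiability (lam C : ℝ)
    (hlam0 : 0 < lam) (hlam1 : lam < 1) (hlamhalf : lam ≠ 1 / 2) (hC : 0 < C)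
    (pX pY f g h k : ℝ → ℝ)
    (hpX : Differentiable ℝ pX) (hpY : Differentiable ℝ pY)
    (hf : Differentiable ℝ f) (hh : Differentiable ℝ h)
    (hgdiff : Differentiable ℝ g) (hkdiff : Differentiable ℝ k)
    (hpXpos : ∀ x, 0 < pX x) (hpYpos : ∀ y, 0 < pY y)
    (hgpos : ∀ x, 0 < g x) (hkpos : ∀ y, 0 < k y)
    (hjoint : ∀ x y : ℝ,
      Real.log (pX x) - Real.log (g x) + Real.log C
          + ((y - f x) / g x) * Real.log lam
          + (1 - (y - f x) / g x) * Real.log (1 - lam)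
        = Real.log (pY y) - Real.log (k y) + Real.log C
          + ((x - h y) / k y) * Real.log lam
          + (1 - (x - h y) / k y) * Real.log (1 - lam)) :
    (∀ x y : ℝ, deriv (fun t => 1 / g t) x = deriv (fun t => 1 / k t) y) ∧
    ∃ c : ℝ, (∀ x, deriv (fun t => 1 / g t) x = c) ∧ (∀ y, deriv (fun t => 1 / k t) y = c) :=
  lsnm_continuous_bernoulli_identifiability_general lam C hlam0 hlam1 hlamhalf pX pY f g h k hjoint
end
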